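/- arXiv:2110.06506 — 3 statements merged into one kernel-verified Lean document; each statement's English description precedes it below -/
import Mathlib

section
/- The Shapley value is efficient: for any TU game (N, v) on a finite set N, the sum over all players i ∈ N of Sh_i(N, v) equals v(N), where Sh_i(N, v) = Σ_{S ⊆ N \ {i}} (|S|! (|N| − |S| − 1)! / |N|!) (v(S ∪ {i}) − v(S)). -/
open Finset

variable {N : Type*} [DecidableEq N] [Fintype N]

/-- The Shapley value of player `i` in the TU game `v`. -/
noncomputable def Shapley (v : Finset N → ℝ) (i : N) : ℝ :=
  ∑ S ∈ (Finset.univ.erase i).powerset,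
    ((Nat.factorial S.card * Nat.factorial (Fintype.card N - S.card - 1) : ℝ) /
      Nat.factorial (Fintype.card N)) * (v (insert i S) - v S)


private lemma shapley_swap (f : N → Finset N → ℝ) :
    ∑ i : N, ∑ S ∈ (Finset.univ.erase i).powerset, f i S
      = ∑ T ∈ (Finset.univ : Finset N).powerset, ∑ i ∈ Tᶜ, f i T := by
  have h1 : ∀ i : N, (Finset.univ.erase i).powerset
      = (Finset.univ : Finset N).powerset.filter (fun S => i ∉ S) := by
    intro i; ext S; simp [Finset.subset_erase]
  simp_rw [h1, Finset.sum_filter]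
  rw [Finset.sum_comm]
  refine Finset.sum_congr rfl fun T _ => ?_
  rw [← Finset.sum_filter]
  congr 1
  ext i
  simp

/-- The Shapley value is efficient. -/
theorem shapley_efficient [Nonempty N] (v : Finset N → ℝ) (h0 : v ∅ = 0) :
    ∑ i : N, Shapley v i = v Finset.univ := by
  classical
  set n := Fintype.card N with hn
  have hn1 : 1 ≤ n := Fintype.card_pos
  set c : ℕ → ℝ := fun k => (k.factorial * (n - k - 1).factorial : ℝ) / n.factorial with hc
  have key : ∑ i : N, Shapley v i
      = ∑ T ∈ (Finset.univ : Finset N).powerset,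
          ∑ i ∈ Tᶜ, c T.card * (v (insert i T) - v T) := by
    simp only [Shapley]
    exact shapley_swap (fun i S => c S.card * (v (insert i S) - v S))
  rw [key]
  simp_rw [mul_sub, Finset.sum_sub_distrib]
  -- first double sum: reindex by U = insert i T
  have step2 : ∑ T ∈ (Finset.univ : Finset N).powerset, ∑ i ∈ Tᶜ, c T.card * v (insert i T)
      = ∑ U ∈ (Finset.univ : Finset N).powerset, ∑ i ∈ U, c (U.card - 1) * v U := by
    rw [Finset.sum_sigma', Finset.sum_sigma']
    refine Finset.sum_nbij' (fun p => ⟨insert p.2 p.1, p.2⟩) (fun q => ⟨q.1.erase q.2, q.2⟩)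
      ?_ ?_ ?_ ?_ ?_
    · rintro ⟨T, i⟩ hp
      simp only [Finset.mem_sigma, Finset.mem_powerset, Finset.mem_compl] at hp ⊢
      simp [Finset.mem_insert]
    · rintro ⟨U, i⟩ hq
      simp only [Finset.mem_sigma, Finset.mem_powerset] at hq ⊢
      simp [Finset.mem_erase, hq.2]
    · rintro ⟨T, i⟩ hp
      simp only [Finset.mem_sigma, Finset.mem_powerset, Finset.mem_compl] at hp
      simp [Finset.erase_insert hp.2]
    · rintro ⟨U, i⟩ hq
      simp only [Finset.mem_sigma, Finset.mem_powerset] at hq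
      simp [Finset.insert_erase hq.2]
    · rintro ⟨T, i⟩ hp
      simp only [Finset.mem_sigma, Finset.mem_powerset, Finset.mem_compl] at hp
      simp [Finset.card_insert_of_notMem hp.2]
  rw [step2]
  have inner1 : ∀ U : Finset N, ∑ i ∈ U, c (U.card - 1) * v U
      = (U.card : ℝ) * c (U.card - 1) * v U := by
    intro U; rw [Finset.sum_const, nsmul_eq_mul]; ring
  have inner2 : ∀ T : Finset N, ∑ i ∈ Tᶜ, c T.card * v T
      = ((n - T.card : ℕ) : ℝ) * c T.card * v T := by
    intro T
    rw [Finset.sum_const, nsmul_eq_mul, Finset.card_compl]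
    ring
  simp_rw [inner1, inner2]
  rw [← Finset.sum_sub_distrib]
  have hfac : (0 : ℝ) < n.factorial := by positivity
  have hA : ∀ t : ℕ, 1 ≤ t → t ≤ n →
      (t : ℝ) * c (t - 1) = (t.factorial * (n - t).factorial : ℝ) / n.factorial := by
    intro t ht1 htn
    simp only [hc]
    have h1 : n - (t - 1) - 1 = n - t := by omega
    rw [h1, mul_div_assoc']
    congr 1
    rw [← mul_assoc]
    rw_mod_cast [Nat.mul_factorial_pred (by omega : t ≠ 0)]
  have hB : ∀ t : ℕ, t < n →
      ((n - t : ℕ) : ℝ) * c t = (t.factorial * (n - t).factorial : ℝ) / n.factorial := by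
    intro t htn
    simp only [hc]
    rw [mul_div_assoc']
    congr 1
    have h2 : n - t - 1 = (n - t) - 1 := rfl
    rw [mul_comm (t.factorial : ℝ), ← mul_assoc]
    rw_mod_cast [h2, Nat.mul_factorial_pred (by omega : n - t ≠ 0)]
    ring
  have coeff : ∀ T ∈ (Finset.univ : Finset N).powerset,
      (T.card : ℝ) * c (T.card - 1) * v T - ((n - T.card : ℕ) : ℝ) * c T.card * v T
        = (if T = Finset.univ then v Finset.univ else 0) := by
    intro T hT
    rcases eq_or_ne T Finset.univ with rfl | hTu
    · have hcard : (Finset.univ : Finset N).card = n := by simp [hn]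
      rw [if_pos rfl, hcard]
      rw [hA n hn1 le_rfl]
      have : n - n = 0 := by omega
      rw [this]
      simp [Nat.factorial_zero, div_self (ne_of_gt hfac)]
    · rw [if_neg hTu]
      rcases eq_or_ne T ∅ with rfl | hTe
      · simp [h0]
      have ht1 : 1 ≤ T.card := Finset.card_pos.2 (Finset.nonempty_of_ne_empty hTe)
      have htn : T.card < n := by
        have := Finset.card_lt_card (Finset.ssubset_univ_iff.2 hTu)
        simpa [hn] using this
      rw [hA T.card ht1 htn.le, hB T.card htn]
      ring
  rw [Finset.sum_congr rfl coeff, Finset.sum_ite_eq' _ Finset.univ (fun _ => v Finset.univ)]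
  simp
end

section
/- The Myerson value of a directed hypergraph game satisfies fairness: for every hyperedge e ∈ E, every i ∈ A_e and every j ∈ B_e, μ_i(N, v, E) − μ_i(N, v, E \ {e}) = μ_j(N, v, E) − μ_j(N, v, E \ {e}). -/
open Finset

variable {N : Type*} [DecidableEq N] [Fintype N]

/-- A directed hyperedge: a pair of nonempty disjoint tail and head sets. -/
abbrev DHyperedge (N : Type*) [DecidableEq N] :=
  {p : Finset N × Finset N // p.1.Nonempty ∧ p.2.Nonempty ∧ Disjoint p.1 p.2}

/-- Tail set of a directed hyperedge. -/
def DHyperedge.tail (e : DHyperedge N) : Finset N := e.1.1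

/-- Head set of a directed hyperedge. -/
def DHyperedge.head (e : DHyperedge N) : Finset N := e.1.2

/-- All players belonging to a directed hyperedge. -/
def DHyperedge.vert (e : DHyperedge N) : Finset N := e.1.1 ∪ e.1.2

/-- One step of a directed path: some hyperedge of `E` has `u` in its tail and `w` in its head. -/
def step (E : Finset (DHyperedge N)) (u w : N) : Prop :=
  ∃ e ∈ E, u ∈ e.tail ∧ w ∈ e.head

/-- Two players are connected if there are directed paths in both directions. -/
def conn (E : Finset (DHyperedge N)) (u w : N) : Prop :=
  Relation.ReflTransGen (step E) u w ∧ Relation.ReflTransGen (step E) w u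

/-- Hyperedges of `E` all of whose players lie in the coalition `S`. -/
def edgesIn (E : Finset (DHyperedge N)) (S : Finset N) : Finset (DHyperedge N) :=
  E.filter (fun e => e.vert ⊆ S)

open scoped Classical in
/-- The strong components of the subhypergraph induced on `S` (i.e. `S/E_S`). -/
noncomputable def components (E : Finset (DHyperedge N)) (S : Finset N) : Finset (Finset N) :=
  S.image (fun i => S.filter (fun j => conn (edgesIn E S) i j))

/-- The directed-hypergraph-restricted game `v^E`. -/
noncomputable def restricted (v : Finset N → ℝ) (E : Finset (DHyperedge N)) (S : Finset N) : ℝ :=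
  ∑ T ∈ components E S, v T

/-- The Myerson value of the directed hypergraph game `(N, v, E)`. -/
noncomputable def myerson (v : Finset N → ℝ) (E : Finset (DHyperedge N)) (i : N) : ℝ :=
  Shapley (restricted v E) i

/-- A hyperedge is a bridge if the strong component containing it splits upon its deletion. -/
def IsBridge (E : Finset (DHyperedge N)) (e : DHyperedge N) : Prop :=
  e ∈ E ∧ ∃ T ∈ components E Finset.univ,
    e.vert ⊆ T ∧ T ∉ components (E.erase e) Finset.univ

/-- A hyperedge is safe if deleting it does not increase any player's Myerson payoff. -/
def Safe (v : Finset N → ℝ) (E : Finset (DHyperedge N)) (e : DHyperedge N) : Prop :=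
  ∀ k : N, myerson v (E.erase e) k ≤ myerson v E k

/-- An allocation rule on directed hypergraph games on the player set `N`. -/
abbrev AllocRule (N : Type*) [DecidableEq N] [Fintype N] :=
  (Finset N → ℝ) → Finset (DHyperedge N) → N → ℝ

/-- Strong component efficiency of an allocation rule. -/
def StrongComponentEfficient (f : AllocRule N) : Prop :=
  ∀ (v : Finset N → ℝ) (E : Finset (DHyperedge N)), v ∅ = 0 →
    ∀ T ∈ components E Finset.univ, ∑ i ∈ T, f v E i = v T

/-- Fairness of an allocation rule. -/
def Fair (f : AllocRule N) : Prop :=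
  ∀ (v : Finset N → ℝ) (E : Finset (DHyperedge N)), v ∅ = 0 →
    ∀ e ∈ E, ∀ i ∈ e.tail, ∀ j ∈ e.head,
      f v E i - f v (E.erase e) i = f v E j - f v (E.erase e) j

lemma edgesIn_erase_of_not_subset {E : Finset (DHyperedge N)} {e : DHyperedge N}
    {S : Finset N} (h : ¬ e.vert ⊆ S) : edgesIn (E.erase e) S = edgesIn E S := by
  ext f
  simp only [edgesIn, Finset.mem_filter, Finset.mem_erase]
  constructor
  · rintro ⟨⟨_, hf⟩, hsub⟩; exact ⟨hf, hsub⟩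
  · rintro ⟨hf, hsub⟩
    refine ⟨⟨?_, hf⟩, hsub⟩
    rintro rfl; exact h hsub

lemma restricted_erase_eq {v : Finset N → ℝ} {E : Finset (DHyperedge N)} {e : DHyperedge N}
    {S : Finset N} (h : ¬ e.vert ⊆ S) :
    restricted v (E.erase e) S = restricted v E S := by
  unfold restricted components
  rw [edgesIn_erase_of_not_subset h]

lemma Shapley_sub (f g : Finset N → ℝ) (i : N) :
    Shapley f i - Shapley g i = Shapley (fun S => f S - g S) i := by
  unfold Shapley
  rw [← Finset.sum_sub_distrib]
  exact Finset.sum_congr rfl fun S _ => by ring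

lemma Shapley_key {e : DHyperedge N} (w : Finset N → ℝ)
    (hw : ∀ (x : N), x ∈ e.vert → ∀ S : Finset N, x ∉ S → w S = 0)
    {a b : N} (hab : a ≠ b) (ha : a ∈ e.vert) (hb : b ∈ e.vert) :
    Shapley w a = ∑ S ∈ ((Finset.univ.erase a).powerset.filter (fun S => b ∈ S)),
      ((Nat.factorial S.card * Nat.factorial (Fintype.card N - S.card - 1) : ℝ) /
        Nat.factorial (Fintype.card N)) * w (insert a S) := by
  unfold Shapley
  rw [Finset.sum_filter_of_ne]
  · apply Finset.sum_congr rfl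
    intro S hS
    have haS : a ∉ S := fun h =>
      (Finset.mem_erase.mp ((Finset.mem_powerset.mp hS) h)).1 rfl
    rw [hw a ha S haS, sub_zero]
  · intro S hS hne
    by_contra hbS
    have : b ∉ insert a S := by
      simp only [Finset.mem_insert]
      rintro (rfl | h)
      · exact hab rfl
      · exact hbS h
    have haS : a ∉ S := fun h =>
      (Finset.mem_erase.mp ((Finset.mem_powerset.mp hS) h)).1 rfl
    rw [hw b hb _ this] at hne
    simp at hne

/-- The Myerson value is fair. -/
theorem myerson_fair (v : Finset N → ℝ) (h0 : v ∅ = 0) (E : Finset (DHyperedge N))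
    (e : DHyperedge N) (he : e ∈ E) :
    ∀ i ∈ e.tail, ∀ j ∈ e.head,
      myerson v E i - myerson v (E.erase e) i
        = myerson v E j - myerson v (E.erase e) j := by
  intro i hi j hj
  have hij : i ≠ j := fun h => Finset.disjoint_left.mp e.2.2.2 hi (h ▸ hj)
  have hiv : i ∈ e.vert := Finset.mem_union_left _ hi
  have hjv : j ∈ e.vert := Finset.mem_union_right _ hj
  set w : Finset N → ℝ := fun S => restricted v E S - restricted v (E.erase e) S with hwdef
  have hw : ∀ (x : N), x ∈ e.vert → ∀ S : Finset N, x ∉ S → w S = 0 := by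
    intro x hx S hxS
    have : ¬ e.vert ⊆ S := fun h => hxS (h hx)
    simp [hwdef, restricted_erase_eq this]
  have h1 : myerson v E i - myerson v (E.erase e) i = Shapley w i := Shapley_sub _ _ _
  have h2 : myerson v E j - myerson v (E.erase e) j = Shapley w j := Shapley_sub _ _ _
  rw [h1, h2, Shapley_key w hw hij hiv hjv, Shapley_key w hw hij.symm hjv hiv]
  refine Finset.sum_bij' (fun S _ => insert i (S.erase j)) (fun T _ => insert j (T.erase i))
    ?_ ?_ ?_ ?_ ?_
  · intro S hS
    simp only [Finset.mem_filter, Finset.mem_powerset] at hS ⊢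
    obtain ⟨hSsub, hjS⟩ := hS
    refine ⟨fun x hx => ?_, Finset.mem_insert_self _ _⟩
    simp only [Finset.mem_insert, Finset.mem_erase] at hx
    rcases hx with rfl | ⟨hxj, hxS⟩
    · exact Finset.mem_erase.mpr ⟨hij, Finset.mem_univ _⟩
    · exact Finset.mem_erase.mpr ⟨hxj, Finset.mem_univ _⟩
  · intro T hT
    simp only [Finset.mem_filter, Finset.mem_powerset] at hT ⊢
    obtain ⟨hTsub, hiT⟩ := hT
    refine ⟨fun x hx => ?_, Finset.mem_insert_self _ _⟩
    simp only [Finset.mem_insert, Finset.mem_erase] at hx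
    rcases hx with rfl | ⟨hxi, hxT⟩
    · exact Finset.mem_erase.mpr ⟨hij.symm, Finset.mem_univ _⟩
    · exact Finset.mem_erase.mpr ⟨hxi, Finset.mem_univ _⟩
  · intro S hS
    simp only [Finset.mem_filter, Finset.mem_powerset] at hS
    obtain ⟨hSsub, hjS⟩ := hS
    have hiS : i ∉ S := fun h => (Finset.mem_erase.mp (hSsub h)).1 rfl
    have hiSe : i ∉ S.erase j := fun h => hiS (Finset.mem_of_mem_erase h)
    simp only [Finset.erase_insert hiSe]
    exact Finset.insert_erase hjS
  · intro T hT
    simp only [Finset.mem_filter, Finset.mem_powerset] at hT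
    obtain ⟨hTsub, hiT⟩ := hT
    have hjT : j ∉ T := fun h => (Finset.mem_erase.mp (hTsub h)).1 rfl
    have hjTe : j ∉ T.erase i := fun h => hjT (Finset.mem_of_mem_erase h)
    simp only [Finset.erase_insert hjTe]
    exact Finset.insert_erase hiT
  · intro S hS
    simp only [Finset.mem_filter, Finset.mem_powerset] at hS
    obtain ⟨hSsub, hjS⟩ := hS
    have hiS : i ∉ S := fun h => (Finset.mem_erase.mp (hSsub h)).1 rfl
    have hiSe : i ∉ S.erase j := fun h => hiS (Finset.mem_of_mem_erase h)
    have hcard : (insert i (S.erase j)).card = S.card := by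
      rw [Finset.card_insert_of_notMem hiSe, Finset.card_erase_of_mem hjS]
      have : 0 < S.card := Finset.card_pos.mpr ⟨j, hjS⟩
      omega
    have hset : insert j (insert i (S.erase j)) = insert i S := by
      rw [Finset.insert_comm, Finset.insert_erase hjS]
    simp only [hcard, hset]
end

section
/- If the TU game (N, v) is superadditive, then for every hyperedge e and every coalition S ⊆ N, v^E(S) ≥ v^{E \ {e}}(S); in particular removing a hyperedge never increases the restricted worth of any coalition. -/
open Finset

variable {N : Type*} [DecidableEq N] [Fintype N]

open scoped Classical in
/-- The component of `i` in `S` under `E`. -/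
noncomputable def comp (E : Finset (DHyperedge N)) (S : Finset N) (i : N) : Finset N :=
  S.filter (fun j => conn (edgesIn E S) i j)

lemma components_eq_image (E : Finset (DHyperedge N)) (S : Finset N) :
    components E S = S.image (comp E S) := rfl

lemma conn_refl (E : Finset (DHyperedge N)) (i : N) : conn E i i :=
  ⟨Relation.ReflTransGen.refl, Relation.ReflTransGen.refl⟩

lemma conn_symm {E : Finset (DHyperedge N)} {i j : N} (h : conn E i j) : conn E j i :=
  ⟨h.2, h.1⟩

lemma conn_trans {E : Finset (DHyperedge N)} {i j k : N} (h : conn E i j) (h' : conn E j k) :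
    conn E i k := ⟨h.1.trans h'.1, h'.2.trans h.2⟩

lemma conn_mono {E E' : Finset (DHyperedge N)} (hE : E' ⊆ E) {i j : N} (h : conn E' i j) :
    conn E i j := by
  refine ⟨Relation.ReflTransGen.mono ?_ _ _ h.1, Relation.ReflTransGen.mono ?_ _ _ h.2⟩ <;>
    exact fun u w ⟨e, he, hu, hw⟩ => ⟨e, hE he, hu, hw⟩

lemma edgesIn_mono {E E' : Finset (DHyperedge N)} (h : E' ⊆ E) (S : Finset N) :
    edgesIn E' S ⊆ edgesIn E S :=
  Finset.filter_subset_filter _ h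

lemma mem_comp_self {E : Finset (DHyperedge N)} {S : Finset N} {i : N} (hi : i ∈ S) :
    i ∈ comp E S i := by
  classical
  exact Finset.mem_filter.2 ⟨hi, conn_refl _ _⟩

lemma mem_comp {E : Finset (DHyperedge N)} {S : Finset N} {i j : N} :
    j ∈ comp E S i ↔ j ∈ S ∧ conn (edgesIn E S) i j := by
  classical
  simp [comp]

lemma comp_eq_of_mem {E : Finset (DHyperedge N)} {S : Finset N} {i j : N}
    (hj : j ∈ comp E S i) : comp E S i = comp E S j := by
  classical
  have hc := (mem_comp.1 hj).2
  ext k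
  simp only [mem_comp]
  exact and_congr_right fun _ =>
    ⟨fun h => conn_trans (conn_symm hc) h, fun h => conn_trans hc h⟩

lemma comp_mono {E E' : Finset (DHyperedge N)} (h : E' ⊆ E) (S : Finset N) (i : N) :
    comp E' S i ⊆ comp E S i := by
  intro j hj
  rw [mem_comp] at hj ⊢
  exact ⟨hj.1, conn_mono (edgesIn_mono h S) hj.2⟩

lemma comp_eq_or_disjoint {E : Finset (DHyperedge N)} {S : Finset N} (i j : N) :
    comp E S i = comp E S j ∨ Disjoint (comp E S i) (comp E S j) := by
  classical
  by_cases h : Disjoint (comp E S i) (comp E S j)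
  · exact Or.inr h
  · left
    obtain ⟨k, hk⟩ := Finset.not_disjoint_iff.1 h
    rw [comp_eq_of_mem hk.1, ← comp_eq_of_mem hk.2]

lemma sum_le_of_pairwiseDisjoint (v : Finset N → ℝ) (h0 : v ∅ = 0)
    (hsa : ∀ S T : Finset N, Disjoint S T → v S + v T ≤ v (S ∪ T))
    (F : Finset (Finset N)) (hF : (F : Set (Finset N)).PairwiseDisjoint id) :
    ∑ A ∈ F, v A ≤ v (F.sup id) := by
  classical
  induction F using Finset.induction_on with
  | empty => simp [h0]
  | @insert a F ha ih =>
    have hPD : (F : Set (Finset N)).PairwiseDisjoint id :=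
      hF.subset (by intro x hx; simp only [Finset.coe_insert, Set.mem_insert_iff]; exact Or.inr hx)
    have hdisj : Disjoint a (F.sup id) := by
      rw [Finset.disjoint_sup_right]
      intro b hb
      exact hF (by simp) (by simp [hb]) (fun hab => ha (hab ▸ hb))
    rw [Finset.sum_insert ha, Finset.sup_insert]
    calc v a + ∑ A ∈ F, v A ≤ v a + v (F.sup id) := by
          linarith [ih hPD]
      _ ≤ v (a ∪ F.sup id) := hsa _ _ hdisj
      _ = v (a ⊔ F.sup id) := by rw [Finset.sup_eq_union]

/-- For a superadditive game, removing a hyperedge never increases the restricted worth. -/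
theorem restricted_mono_of_superadditive (v : Finset N → ℝ) (h0 : v ∅ = 0)
    (hsa : ∀ S T : Finset N, Disjoint S T → v S + v T ≤ v (S ∪ T))
    (E : Finset (DHyperedge N)) (e : DHyperedge N) (he : e ∈ E) (S : Finset N) :
    restricted v (E.erase e) S ≤ restricted v E S := by
  classical
  have hsub : E.erase e ⊆ E := Finset.erase_subset _ _
  set E' := E.erase e with hE'
  unfold restricted
  -- group components of E' by the component of E containing them
  have hbi : components E' S =
      (components E S).biUnion
        (fun T => (components E' S).filter (fun T' => T' ⊆ T)) := by
    ext T'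
    simp only [Finset.mem_biUnion, Finset.mem_filter]
    constructor
    · intro hT'
      rw [components_eq_image] at hT'
      obtain ⟨i, hi, rfl⟩ := Finset.mem_image.1 hT'
      refine ⟨comp E S i, ?_, hT', comp_mono hsub S i⟩
      rw [components_eq_image]
      exact Finset.mem_image_of_mem _ hi
    · rintro ⟨T, _, hT', _⟩
      exact hT'
  have hne : ∀ T ∈ components E' S, T.Nonempty := by
    intro T hT
    rw [components_eq_image] at hT
    obtain ⟨i, hi, rfl⟩ := Finset.mem_image.1 hT
    exact ⟨i, mem_comp_self hi⟩
  have hdisjE : ∀ T₁ ∈ components E S, ∀ T₂ ∈ components E S,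
      T₁ ≠ T₂ → Disjoint T₁ T₂ := by
    intro T₁ h₁ T₂ h₂ hne12
    rw [components_eq_image] at h₁ h₂
    obtain ⟨i, _, rfl⟩ := Finset.mem_image.1 h₁
    obtain ⟨j, _, rfl⟩ := Finset.mem_image.1 h₂
    rcases comp_eq_or_disjoint (E := E) (S := S) i j with h | h
    · exact absurd h hne12
    · exact h
  have hsetdisj : (↑(components E S) : Set (Finset N)).PairwiseDisjoint
      (fun T => (components E' S).filter (fun T' => T' ⊆ T)) := by
    intro T₁ h₁ T₂ h₂ h12
    refine Finset.disjoint_left.2 fun T' hT'1 hT'2 => ?_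
    simp only [Finset.mem_filter] at hT'1 hT'2
    obtain ⟨k, hk⟩ := hne T' hT'1.1
    exact Finset.disjoint_left.1 (hdisjE T₁ h₁ T₂ h₂ h12) (hT'1.2 hk) (hT'2.2 hk)
  rw [hbi, Finset.sum_biUnion hsetdisj]
  apply Finset.sum_le_sum
  intro T hT
  set F := (components E' S).filter (fun T' => T' ⊆ T) with hF
  have hFsup : F.sup id = T := by
    apply le_antisymm
    · exact Finset.sup_le fun T' hT' => (Finset.mem_filter.1 hT').2
    · intro i hi
      -- i ∈ T; show i ∈ F.sup id
      rw [components_eq_image] at hT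
      obtain ⟨j, hj, rfl⟩ := Finset.mem_image.1 hT
      have hT_eq : comp E S j = comp E S i := comp_eq_of_mem hi
      have hiS : i ∈ S := (mem_comp.1 hi).1
      have hmem : comp E' S i ∈ F := by
        rw [hF, Finset.mem_filter]
        refine ⟨?_, ?_⟩
        · rw [components_eq_image]; exact Finset.mem_image_of_mem _ hiS
        · rw [hT_eq]; exact comp_mono hsub S i
      exact (Finset.le_sup (f := id) hmem : comp E' S i ⊆ F.sup id) (mem_comp_self hiS)
  have hFPD : (↑F : Set (Finset N)).PairwiseDisjoint id := by
    intro T₁ h₁ T₂ h₂ h12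
    have h₁' := (Finset.mem_filter.1 h₁).1
    have h₂' := (Finset.mem_filter.1 h₂).1
    rw [components_eq_image] at h₁' h₂'
    obtain ⟨i, _, hTi⟩ := Finset.mem_image.1 h₁'
    obtain ⟨j, _, hTj⟩ := Finset.mem_image.1 h₂'
    rcases comp_eq_or_disjoint (E := E') (S := S) i j with h | h
    · exact absurd (hTi ▸ hTj ▸ h) h12
    · exact hTi ▸ hTj ▸ h
  calc ∑ T' ∈ F, v T' ≤ v (F.sup id) := sum_le_of_pairwiseDisjoint v h0 hsa F hFPD
    _ = v T := by rw [hFsup]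
end
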